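/- Define rational numbers D_{i,k} for even k ≥ 4 and d_{i,k} for even k ≥ 2 by D_{i,k} = (1/2)^{i+1} e_i(1, 3, ..., k-3) and d_{i,k} = (1/2)^{i+1} e_i(2, 4, ..., k-2). Then for every even k ≥ 6 and i ≥ 1 with i ≤ k-3, the recursion D_{i,k} = 2 ∑_{j odd, 1 ≤ j ≤ k-3} C(k-3, j) ∑_{ℓ=0}^{i} (-1)^ℓ d_{i-ℓ, k-1-j} d_{ℓ, j+1} − 2 ∑_{j even, 2 ≤ j ≤ k-3} C(k-3, j) ∑_{ℓ=0}^{i} (-1)^ℓ D_{i-ℓ, k-j} D_{ℓ, j+2} holds. -/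

import Mathlib

/-!
Write `E_f(c) = ∏_{t<c} (1 + f(t) X)`, so that `D_{i,2c+2}` and `d_{i,2c+2}` are half the `i`-th
coefficients of `E_f(c)` for `f(t) = t + 1/2` and `f(t) = t + 1`, and the signs `(-1)^ℓ` turn
`E_f` into `E_{-f}`. For `k = 2m + 2` put `W_j = ∏_{t<m} (1 + (t + (1 - j)/2) X)`. Splitting the
product at `t = j/2` gives `W_{2b} = E_{t+1/2}(m-b) E_{-(t+1/2)}(b)` and
`W_{2a+1} = E_{t+1}(m-1-a) E_{-(t+1)}(a)`, so both inner sums over `ℓ` are `1/4` of the `i`-th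
coefficient of `W_j`. Since `W_j` is a polynomial of degree `m < 2m - 1` in `j`, its
`(2m-1)`-th finite difference vanishes: the binomial sums of `W_j` over odd and over even `j`
agree. Isolating `W_0 = E_{t+1/2}(m)` from the even side gives the recursion.
-/

/-- `e_i(1, 3, ..., k-3)`, the `i`-th elementary symmetric function of the
odd integers from `1` to `k - 3` (there are `(k-2)/2` of them). -/
def eOdd (i k : ℕ) : ℚ :=
  ∑ s ∈ Finset.powersetCard i (Finset.range ((k - 2) / 2)), ∏ n ∈ s, (2 * (n : ℚ) + 1)

/-- `e_i(2, 4, ..., k-2)`, the `i`-th elementary symmetric function of the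
even integers from `2` to `k - 2` (there are `(k-2)/2` of them). -/
def eEven (i k : ℕ) : ℚ :=
  ∑ s ∈ Finset.powersetCard i (Finset.range ((k - 2) / 2)), ∏ n ∈ s, (2 * ((n : ℚ) + 1))

/-- `D_{i,k} = (1/2)^(i+1) e_i(1, 3, ..., k-3)`. -/
def Dint (i k : ℕ) : ℚ := (1 / 2) ^ (i + 1) * eOdd i k

/-- `d_{i,k} = (1/2)^(i+1) e_i(2, 4, ..., k-2)`. -/
def dint (i k : ℕ) : ℚ := (1 / 2) ^ (i + 1) * eEven i k

open Finset Polynomial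

section

variable {R : Type*} [CommRing R]

noncomputable def elemPoly (f : ℕ → R) (c : ℕ) : R[X] := ∏ t ∈ range c, (1 + C (f t) * X)

theorem coeff_elemPoly (f : ℕ → R) (c i : ℕ) :
    (elemPoly f c).coeff i = ∑ u ∈ (range c).powersetCard i, ∏ t ∈ u, f t := by
  have hterm : ∀ u : Finset ℕ, ∏ t ∈ u, C (f t) * X = C (∏ t ∈ u, f t) * X ^ #u := fun u => by
    rw [prod_mul_distrib, prod_const, map_prod]
  simp only [elemPoly, prod_one_add, hterm, finsetSum_coeff, coeff_C_mul_X_pow,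
    powersetCard_eq_filter, sum_filter, eq_comm]

theorem coeff_elemPoly_const_mul (a : R) (f : ℕ → R) (c i : ℕ) :
    (elemPoly (fun t => a * f t) c).coeff i = a ^ i * (elemPoly f c).coeff i := by
  rw [coeff_elemPoly, coeff_elemPoly, mul_sum]
  refine sum_congr rfl fun u hu => ?_
  rw [prod_mul_distrib, prod_const, (mem_powersetCard.1 hu).2]

theorem coeff_elemPoly_neg (f : ℕ → R) (c i : ℕ) :
    (elemPoly (-f) c).coeff i = (-1) ^ i * (elemPoly f c).coeff i := by
  simpa [Pi.neg_def] using coeff_elemPoly_const_mul (-1) f c i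

theorem coeff_mul_elemPoly_neg (P : R[X]) (f : ℕ → R) (c i : ℕ) :
    (P * elemPoly (-f) c).coeff i =
      ∑ ℓ ∈ range (i + 1), (-1) ^ ℓ * P.coeff (i - ℓ) * (elemPoly f c).coeff ℓ := by
  rw [mul_comm, coeff_mul, Nat.sum_antidiagonal_eq_sum_range_succ_mk]
  refine sum_congr rfl fun ℓ _ => ?_
  rw [coeff_elemPoly_neg]
  ring

theorem elemPoly_congr {f g : ℕ → R} {c : ℕ} (h : ∀ t < c, f t = g t) :
    elemPoly f c = elemPoly g c :=
  prod_congr rfl fun t ht => by rw [h t (mem_range.1 ht)]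

theorem elemPoly_add (f : ℕ → R) (a c : ℕ) :
    elemPoly f (a + c) = elemPoly (fun t => f (a + t)) c * elemPoly (fun t => f (a - 1 - t)) a := by
  rw [elemPoly, prod_range_add, mul_comm, elemPoly, elemPoly, prod_range_reflect
    (fun t => 1 + C (f t) * X)]

theorem sum_range_choose_mul_prod_affine_eq_zero {ι : Type*} (s : Finset ι) (u v : ι → R)
    {n : ℕ} (hn : #s < n) :
    ∑ k ∈ range (n + 1), (-1) ^ (n - k) * (n.choose k : R) * ∏ t ∈ s, (u t + v t * k) = 0 := by
  set P : R[X] := ∏ t ∈ s, (C (u t) + C (v t) * X)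
  have hdeg : P.natDegree < n := by
    refine lt_of_le_of_lt (natDegree_prod_le _ _ |>.trans ?_) hn
    refine (sum_le_sum fun t _ => ?_).trans_eq (card_eq_sum_ones s).symm
    rw [add_comm]
    exact natDegree_linear_le
  have h := congrFun (fwdDiff_iter_eq_zero_of_degree_lt hdeg) 0
  rw [fwdDiff_iter_eq_sum_shift] at h
  simpa [P, eval_prod, zsmul_eq_mul] using h

theorem sum_filter_odd_eq_sum_filter_even {n : ℕ} (hn : Odd n) (f : ℕ → R)
    (h : ∑ k ∈ range (n + 1), (-1) ^ (n - k) * f k = 0) :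
    ∑ k ∈ (range (n + 1)).filter Odd, f k = ∑ k ∈ (range (n + 1)).filter Even, f k := by
  have hodd : ∀ k ∈ (range (n + 1)).filter Odd, (-1 : R) ^ (n - k) * f k = f k := fun k hk => by
    rw [(Nat.Odd.sub_odd hn (mem_filter.1 hk).2).neg_one_pow, one_mul]
  have heven : ∀ k ∈ (range (n + 1)).filter Even, (-1 : R) ^ (n - k) * f k = -f k := by
    intro k hk
    obtain ⟨hk, hke⟩ := mem_filter.1 hk
    rw [(Nat.Odd.sub_even (by simpa [Nat.lt_succ_iff] using hk) hn hke).neg_one_pow, neg_one_mul]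
  rw [← sum_filter_add_sum_filter_not _ Odd] at h
  simp only [Nat.not_odd_iff_even] at h
  rwa [sum_congr rfl hodd, sum_congr rfl heven, sum_neg_distrib, ← sub_eq_add_neg,
    sub_eq_zero] at h

end

def halfOdd (x : ℚ) (t : ℕ) : ℚ := (2 * t + 1 - x) / 2

theorem Dint_eq_half_mul_coeff (i c : ℕ) :
    Dint i (2 * c + 2) = 1 / 2 * (elemPoly (halfOdd 0) c).coeff i := by
  have h : halfOdd 0 = fun t : ℕ => 1 / 2 * (2 * (t : ℚ) + 1) := funext fun t => by
    rw [halfOdd]; ring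
  rw [Dint, eOdd, h, coeff_elemPoly_const_mul, coeff_elemPoly, pow_succ',
    show (2 * c + 2 - 2) / 2 = c by omega, mul_assoc]

theorem dint_eq_half_mul_coeff (i c : ℕ) :
    dint i (2 * c + 2) = 1 / 2 * (elemPoly (fun t => (t : ℚ) + 1) c).coeff i := by
  have h : (fun t : ℕ => (t : ℚ) + 1) = fun t : ℕ => 1 / 2 * (2 * ((t : ℚ) + 1)) :=
    funext fun t => by ring
  rw [dint, eEven, h, coeff_elemPoly_const_mul, coeff_elemPoly, pow_succ',
    show (2 * c + 2 - 2) / 2 = c by omega, mul_assoc]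

theorem elemPoly_halfOdd_two_mul (b c : ℕ) :
    elemPoly (halfOdd (2 * b : ℕ)) (b + c) = elemPoly (halfOdd 0) c * elemPoly (-halfOdd 0) b := by
  rw [elemPoly_add]
  congr 1
  · congr 1; funext t; simp only [halfOdd]; push_cast; ring
  · refine elemPoly_congr fun t ht => ?_
    simp only [halfOdd, Pi.neg_apply]
    rw [Nat.cast_sub (by omega), Nat.cast_sub (by omega)]
    push_cast; ring

theorem elemPoly_halfOdd_two_mul_add_one (a c : ℕ) :
    elemPoly (halfOdd (2 * a + 1 : ℕ)) (a + (c + 1)) =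
      elemPoly (fun t => (t : ℚ) + 1) c * elemPoly (-fun t : ℕ => (t : ℚ) + 1) a := by
  rw [elemPoly_add]
  congr 1
  · have hzero : halfOdd (2 * a + 1 : ℕ) (a + 0) = 0 := by rw [halfOdd]; push_cast; ring
    rw [elemPoly, prod_range_succ', hzero, map_zero, zero_mul, add_zero, mul_one]
    refine prod_congr rfl fun t _ => ?_
    rw [halfOdd]; push_cast; ring_nf
  · refine elemPoly_congr fun t ht => ?_
    simp only [halfOdd, Pi.neg_apply]
    rw [Nat.cast_sub (by omega), Nat.cast_sub (by omega)]
    push_cast; ring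

theorem sum_neg_one_pow_mul_dint_mul_dint {m j : ℕ} (hj : Odd j) (hjm : j < 2 * m) (i : ℕ) :
    ∑ ℓ ∈ range (i + 1), (-1 : ℚ) ^ ℓ * dint (i - ℓ) (2 * m + 2 - 1 - j) * dint ℓ (j + 1) =
      1 / 4 * (elemPoly (halfOdd j) m).coeff i := by
  obtain ⟨a, rfl⟩ := hj
  obtain ⟨c, rfl⟩ : ∃ c, m = a + (c + 1) := ⟨m - a - 1, by omega⟩
  rw [elemPoly_halfOdd_two_mul_add_one, coeff_mul_elemPoly_neg, mul_sum,
    show 2 * (a + (c + 1)) + 2 - 1 - (2 * a + 1) = 2 * c + 2 by omega]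
  refine sum_congr rfl fun ℓ _ => ?_
  rw [dint_eq_half_mul_coeff, dint_eq_half_mul_coeff]
  ring

theorem sum_neg_one_pow_mul_Dint_mul_Dint {m j : ℕ} (hj : Even j) (hjm : j ≤ 2 * m) (i : ℕ) :
    ∑ ℓ ∈ range (i + 1), (-1 : ℚ) ^ ℓ * Dint (i - ℓ) (2 * m + 2 - j) * Dint ℓ (j + 2) =
      1 / 4 * (elemPoly (halfOdd j) m).coeff i := by
  obtain ⟨b, rfl⟩ := hj
  obtain ⟨c, rfl⟩ : ∃ c, m = b + c := ⟨m - b, by omega⟩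
  rw [← two_mul, elemPoly_halfOdd_two_mul, coeff_mul_elemPoly_neg, mul_sum,
    show 2 * (b + c) + 2 - 2 * b = 2 * c + 2 by omega]
  refine sum_congr rfl fun ℓ _ => ?_
  rw [Dint_eq_half_mul_coeff, Dint_eq_half_mul_coeff]
  ring

theorem sum_filter_odd_choose_mul_coeff_elemPoly_halfOdd {m : ℕ} (hm : 2 ≤ m) (i : ℕ) :
    ∑ j ∈ (range (2 * m)).filter Odd, ((2 * m - 1).choose j : ℚ) *
        (elemPoly (halfOdd j) m).coeff i =
      ∑ j ∈ (range (2 * m)).filter Even, ((2 * m - 1).choose j : ℚ) *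
        (elemPoly (halfOdd j) m).coeff i := by
  have haffine : ∀ j : ℕ, elemPoly (halfOdd j) m =
      ∏ t ∈ range m, ((1 + C (halfOdd 0 t) * X) + -(C (1 / 2) * X) * (j : ℚ[X])) := fun j =>
    prod_congr rfl fun t _ => by
      have hshift : halfOdd j t = halfOdd 0 t + -(1 / 2) * j := by rw [halfOdd, halfOdd]; ring
      rw [hshift, map_add, map_mul, map_neg, map_natCast]
      ring
  have h := sum_range_choose_mul_prod_affine_eq_zero (range m)
    (fun t => 1 + C (halfOdd 0 t) * X) (fun _ => -(C (1 / 2) * X)) (n := 2 * m - 1)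
    (by rw [card_range]; omega)
  simp only [← haffine, mul_assoc] at h
  have hodd : Odd (2 * m - 1) := ⟨m - 1, by omega⟩
  have := congrArg (coeff · i) (sum_filter_odd_eq_sum_filter_even hodd _ h)
  simpa only [finsetSum_coeff, coeff_natCast_mul, show 2 * m - 1 + 1 = 2 * m by omega] using this

theorem first_recursion_general (k : ℕ) (hk : Even k) (hk6 : 6 ≤ k) (i : ℕ) :
    Dint i k =
      2 * (∑ j ∈ (Finset.range (k - 2)).filter (fun j => Odd j),
        (Nat.choose (k - 3) j : ℚ) *
          ∑ ℓ ∈ Finset.range (i + 1),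
            (-1 : ℚ) ^ ℓ * dint (i - ℓ) (k - 1 - j) * dint ℓ (j + 1)) -
      2 * (∑ j ∈ (Finset.range (k - 2)).filter (fun j => Even j ∧ j ≠ 0),
        (Nat.choose (k - 3) j : ℚ) *
          ∑ ℓ ∈ Finset.range (i + 1),
            (-1 : ℚ) ^ ℓ * Dint (i - ℓ) (k - j) * Dint ℓ (j + 2)) := by
  obtain ⟨m, rfl⟩ : ∃ m, k = 2 * m + 2 := by
    obtain ⟨r, hr⟩ := hk
    exact ⟨r - 1, by omega⟩
  rw [show 2 * m + 2 - 2 = 2 * m by omega, show 2 * m + 2 - 3 = 2 * m - 1 by omega]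
  have hodd := sum_congr rfl fun j (hj : j ∈ (range (2 * m)).filter (fun j => Odd j)) =>
    congrArg (((2 * m - 1).choose j : ℚ) * ·) <| sum_neg_one_pow_mul_dint_mul_dint
      (mem_filter.1 hj).2 (mem_range.1 (mem_filter.1 hj).1) i
  have heven := sum_congr rfl fun j (hj : j ∈ (range (2 * m)).filter (fun j => Even j ∧ j ≠ 0)) =>
    congrArg (((2 * m - 1).choose j : ℚ) * ·) <| sum_neg_one_pow_mul_Dint_mul_Dint
      (mem_filter.1 hj).2.1 (mem_range.1 (mem_filter.1 hj).1).le i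
  have key := sum_filter_odd_choose_mul_coeff_elemPoly_halfOdd (m := m) (by omega) i
  rw [← add_sum_erase _ _ (mem_filter.2 ⟨mem_range.2 (by omega), Even.zero⟩), ← filter_ne',
    filter_filter] at key
  simp only [Nat.choose_zero_right, Nat.cast_zero, Nat.cast_one, one_mul] at key
  rw [hodd, heven, Dint_eq_half_mul_coeff]
  simp only [mul_left_comm _ (1 / 4 : ℚ), ← mul_sum]
  linarith

theorem first_recursion (k : ℕ) (hk : Even k) (hk6 : 6 ≤ k) (i : ℕ) (hi : 1 ≤ i)
    (hik : i ≤ k - 3) :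
    Dint i k =
      2 * (∑ j ∈ (Finset.range (k - 2)).filter (fun j => Odd j),
        (Nat.choose (k - 3) j : ℚ) *
          ∑ ℓ ∈ Finset.range (i + 1),
            (-1 : ℚ) ^ ℓ * dint (i - ℓ) (k - 1 - j) * dint ℓ (j + 1)) -
      2 * (∑ j ∈ (Finset.range (k - 2)).filter (fun j => Even j ∧ j ≠ 0),
        (Nat.choose (k - 3) j : ℚ) *
          ∑ ℓ ∈ Finset.range (i + 1),
            (-1 : ℚ) ^ ℓ * Dint (i - ℓ) (k - j) * Dint ℓ (j + 2)) :=
  first_recursion_general k hk hk6 i
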